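/- For a unitary U_{Ga} on ℂ^d ⊗ ℂ², the ancilla-projected fidelity (1/d²)|Tr(U_G'† U_T)|² with U_G' = ⟨0|_a U_{Ga} |0⟩_a equals 1 if and only if U_{Ga} = (e^{iφ} U_T) ⊗ |0⟩⟨0| + V ⊗ |1⟩⟨1| for some phase φ and some unitary V on ℂ^d. -/

import Mathlib

open Matrix Kronecker

private lemma sum_conj_mul' {ι : Type*} (s : Finset ι) (f : ι → ℂ) :
    ∑ i ∈ s, (starRingEnd ℂ) (f i) * f i = ((∑ i ∈ s, Complex.normSq (f i) : ℝ) : ℂ) := by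
  push_cast
  exact Finset.sum_congr rfl fun i _ => (Complex.normSq_eq_conj_mul_self (z := f i)).symm

private lemma sum_mul_conj' {ι : Type*} (s : Finset ι) (f : ι → ℂ) :
    ∑ i ∈ s, f i * (starRingEnd ℂ) (f i) = ((∑ i ∈ s, Complex.normSq (f i) : ℝ) : ℂ) := by
  push_cast
  exact Finset.sum_congr rfl fun i _ => Complex.mul_conj (f i)

/-- the ancilla-projected fidelity `(1/d²)|Tr(U_G'† U_T)|²` with
`U_G' = ⟨0|ₐ U_{Ga} |0⟩ₐ` equals `1` iff
`U_{Ga} = (e^{iφ} U_T) ⊗ |0⟩⟨0| + V ⊗ |1⟩⟨1|` for some phase `φ` and unitary `V`. -/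
theorem ancilla_fidelity_eq_one_iff (d : ℕ) (hd : 1 ≤ d)
    (U_Ga : Matrix (Fin d × Fin 2) (Fin d × Fin 2) ℂ)
    (U_T : Matrix (Fin d) (Fin d) ℂ)
    (hGa : U_Ga ∈ Matrix.unitaryGroup (Fin d × Fin 2) ℂ)
    (hT : U_T ∈ Matrix.unitaryGroup (Fin d) ℂ) :
    (1 / (d : ℝ) ^ 2) *
        ‖Matrix.trace ((Matrix.of fun i j : Fin d => U_Ga (i, 0) (j, 0))ᴴ * U_T)‖ ^ 2
        = 1 ↔
      ∃ φ : ℝ, ∃ V ∈ Matrix.unitaryGroup (Fin d) ℂ,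
        U_Ga = (Complex.exp (φ * Complex.I) • U_T) ⊗ₖ
            Matrix.single (0 : Fin 2) (0 : Fin 2) (1 : ℂ) +
          V ⊗ₖ Matrix.single (1 : Fin 2) (1 : Fin 2) (1 : ℂ) := by
  have hd0 : (d : ℝ) ≠ 0 := Nat.cast_ne_zero.mpr (by omega)
  have hTl : U_Tᴴ * U_T = 1 := Matrix.mem_unitaryGroup_iff'.mp hT
  have hTr : U_T * U_Tᴴ = 1 := Matrix.mem_unitaryGroup_iff.mp hT
  have hGl : U_Gaᴴ * U_Ga = 1 := Matrix.mem_unitaryGroup_iff'.mp hGa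
  have hGr : U_Ga * U_Gaᴴ = 1 := Matrix.mem_unitaryGroup_iff.mp hGa
  set A : Matrix (Fin d) (Fin d) ℂ := Matrix.of fun i j : Fin d => U_Ga (i, 0) (j, 0) with hAdef
  -- column norms of U_Ga at ancilla 0
  have hcol0 : ∀ j : Fin d,
      (∑ i, Complex.normSq (A i j)) + (∑ i, Complex.normSq (U_Ga (i,1) (j,0))) = 1 := by
    intro j
    have h2 := congrArg (fun M => M ((j : Fin d),(0 : Fin 2)) (j,0)) hGl
    simp only [Matrix.mul_apply, Matrix.conjTranspose_apply, Matrix.one_apply_eq,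
      Fintype.sum_prod_type_right, Fin.sum_univ_two, Complex.star_def] at h2
    rw [sum_conj_mul', sum_conj_mul'] at h2
    exact_mod_cast h2
  -- column norms of U_T
  have hTcol : ∀ j : Fin d, (∑ i, Complex.normSq (U_T i j)) = 1 := by
    intro j
    have h2 := congrArg (fun M => M j j) hTl
    simp only [Matrix.mul_apply, Matrix.conjTranspose_apply, Matrix.one_apply_eq,
      Complex.star_def] at h2
    rw [sum_conj_mul'] at h2
    exact_mod_cast h2
  have hTrow : ∀ i : Fin d, (∑ j, Complex.normSq (U_T i j)) = 1 := by
    intro i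
    have h2 := congrArg (fun M => M i i) hTr
    simp only [Matrix.mul_apply, Matrix.conjTranspose_apply, Matrix.one_apply_eq,
      Complex.star_def] at h2
    rw [sum_mul_conj'] at h2
    exact_mod_cast h2
  constructor
  · intro h
    -- |trace (Aᴴ * U_T)| = d
    have habs : ‖Matrix.trace (Aᴴ * U_T)‖ = d := by
      field_simp at h
      nlinarith [norm_nonneg (Matrix.trace (Aᴴ * U_T)), Nat.cast_nonneg (α := ℝ) d, h]
    set N : Matrix (Fin d) (Fin d) ℂ := U_Tᴴ * A with hNdef
    have hNtr : ‖Matrix.trace N‖ = d := by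
      have h1 : Aᴴ * U_T = Nᴴ := by
        rw [hNdef, Matrix.conjTranspose_mul, Matrix.conjTranspose_conjTranspose]
      rw [h1, Matrix.trace_conjTranspose] at habs
      simpa using habs
    have hNN : Nᴴ * N = Aᴴ * A := by
      rw [hNdef, Matrix.conjTranspose_mul, Matrix.conjTranspose_conjTranspose,
        Matrix.mul_assoc, ← Matrix.mul_assoc U_T, hTr, Matrix.one_mul]
    have hNcol : ∀ j : Fin d, (∑ i, Complex.normSq (N i j)) ≤ 1 := by
      intro j
      have h2 := congrArg (fun M => M j j) hNN
      simp only [Matrix.mul_apply, Matrix.conjTranspose_apply, Complex.star_def] at h2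
      rw [sum_conj_mul', sum_conj_mul'] at h2
      have h3 : (∑ i, Complex.normSq (N i j)) = ∑ i, Complex.normSq (A i j) := by
        exact_mod_cast h2
      rw [h3]
      have := hcol0 j
      have hnn : 0 ≤ ∑ i, Complex.normSq (U_Ga (i,1) (j,0)) :=
        Finset.sum_nonneg fun i _ => Complex.normSq_nonneg _
      linarith
    have hzle : ∀ j : Fin d, ‖N j j‖ ≤ 1 := by
      intro j
      have h1 : Complex.normSq (N j j) ≤ 1 := by
        have := Finset.single_le_sum (f := fun i => Complex.normSq (N i j))
          (fun i _ => Complex.normSq_nonneg _) (Finset.mem_univ j)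
        linarith [hNcol j]
      rw [← Complex.sq_norm] at h1
      nlinarith [norm_nonneg (N j j)]
    -- the common phase
    set u : ℂ := Matrix.trace N / d with hudef
    have hu : ‖u‖ = 1 := by
      rw [hudef, norm_div, hNtr]
      simp [hd0]
    have hcu : (starRingEnd ℂ) u * u = 1 := by
      rw [Complex.conj_mul']
      norm_cast
      rw [hu]; norm_num
    have hsum : ∑ j, ((starRingEnd ℂ) u * N j j).re = d := by
      have h1 : (starRingEnd ℂ) u * Matrix.trace N = (d : ℂ) := by
        have hdc : (d : ℂ) ≠ 0 := Nat.cast_ne_zero.mpr (by omega)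
        have : Matrix.trace N = (d : ℂ) * u := by
          rw [hudef]; rw [mul_div_assoc']; exact (mul_div_cancel_left₀ _ hdc).symm
        rw [this, ← mul_assoc, mul_comm ((starRingEnd ℂ) u) ((d:ℂ)), mul_assoc, hcu, mul_one]
      calc ∑ j, ((starRingEnd ℂ) u * N j j).re
          = ((starRingEnd ℂ) u * Matrix.trace N).re := by
            have htr : Matrix.trace N = ∑ j, N j j := rfl
            rw [htr, Finset.mul_sum]
            exact (Complex.re_sum _ _).symm
        _ = d := by rw [h1]; simp
    have hre1 : ∀ j : Fin d, ((starRingEnd ℂ) u * N j j).re = 1 := by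
      have hle : ∀ j ∈ Finset.univ (α := Fin d),
          ((starRingEnd ℂ) u * N j j).re ≤ (fun _ => (1:ℝ)) j := by
        intro j _
        calc ((starRingEnd ℂ) u * N j j).re ≤ ‖(starRingEnd ℂ) u * N j j‖ :=
              Complex.re_le_norm _
          _ = ‖u‖ * ‖N j j‖ := by
              rw [norm_mul, Complex.norm_conj]
          _ ≤ 1 := by rw [hu, one_mul]; exact hzle j
      have hsums : ∑ j, ((starRingEnd ℂ) u * N j j).re = ∑ _j : Fin d, (1:ℝ) := by
        rw [hsum]; simp
      intro j
      exact (Finset.sum_eq_sum_iff_of_le hle).mp hsums j (Finset.mem_univ j)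
    have hdiag : ∀ j : Fin d, N j j = u := by
      intro j
      set w : ℂ := (starRingEnd ℂ) u * N j j with hwdef
      have hwabs : ‖w‖ ≤ 1 := by
        rw [hwdef, norm_mul, Complex.norm_conj, hu, one_mul]; exact hzle j
      have hw1 : w = 1 := by
        have h1 : w.re = 1 := hre1 j
        have habs2 : ‖w‖ ^ 2 ≤ 1 := by nlinarith [norm_nonneg w]
        have h2 : w.re ^ 2 + w.im ^ 2 ≤ 1 := by
          have := Complex.sq_norm w
          rw [Complex.normSq_apply] at this
          nlinarith
        have h3 : w.im = 0 := by nlinarith [sq_nonneg w.im]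
        exact Complex.ext h1 h3
      have : u * w = u := by rw [hw1, mul_one]
      rw [hwdef, ← mul_assoc, mul_comm u, hcu, one_mul] at this
      exact this
    have hnormu : Complex.normSq u = 1 := by
      rw [← Complex.sq_norm, hu]; norm_num
    have hoff : ∀ i j : Fin d, i ≠ j → N i j = 0 := by
      intro i j hij
      have h1 : Complex.normSq (N j j) + ∑ i ∈ Finset.univ.erase j, Complex.normSq (N i j)
          = ∑ i, Complex.normSq (N i j) :=
        Finset.add_sum_erase Finset.univ (fun i => Complex.normSq (N i j)) (Finset.mem_univ j)
      have h2 : ∑ i ∈ Finset.univ.erase j, Complex.normSq (N i j) ≤ 0 := by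
        rw [hdiag j, hnormu] at h1
        linarith [hNcol j]
      have h3 : Complex.normSq (N i j) ≤ 0 := by
        have := Finset.single_le_sum (f := fun i => Complex.normSq (N i j))
          (fun i _ => Complex.normSq_nonneg _) (Finset.mem_erase.mpr ⟨hij, Finset.mem_univ i⟩)
        linarith
      have h4 : Complex.normSq (N i j) = 0 :=
        le_antisymm h3 (Complex.normSq_nonneg _)
      exact Complex.normSq_eq_zero.mp h4
    have hNsmul : N = u • (1 : Matrix (Fin d) (Fin d) ℂ) := by
      ext i j
      by_cases hij : i = j
      · subst hij; simp [hdiag i]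
      · simp [hoff i j hij, Matrix.one_apply_ne hij]
    have hAeq : A = u • U_T := by
      have h1 : U_T * N = A := by
        rw [hNdef, ← Matrix.mul_assoc, hTr, Matrix.one_mul]
      rw [hNsmul, Matrix.mul_smul, Matrix.mul_one] at h1
      exact h1.symm
    -- block structure
    have hAentry : ∀ i j : Fin d, U_Ga (i,0) (j,0) = u * U_T i j := by
      intro i j
      have := congrArg (fun M => M i j) hAeq
      simpa [hAdef] using this
    have hlow : ∀ i j : Fin d, U_Ga (i,1) (j,0) = 0 := by
      intro i j
      have hS0 : (∑ i, Complex.normSq (A i j)) = 1 := by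
        have : ∀ i, Complex.normSq (A i j) = Complex.normSq (U_T i j) := by
          intro i
          show Complex.normSq (U_Ga (i,0) (j,0)) = _
          rw [hAentry i j, Complex.normSq_mul, hnormu, one_mul]
        rw [Finset.sum_congr rfl fun i _ => this i, hTcol j]
      have h2 : ∑ i, Complex.normSq (U_Ga (i,1) (j,0)) = 0 := by
        have := hcol0 j; linarith
      have h3 : Complex.normSq (U_Ga (i,1) (j,0)) = 0 := by
        have h4 := Finset.single_le_sum (f := fun i => Complex.normSq (U_Ga (i,1) (j,0)))
          (fun i _ => Complex.normSq_nonneg _) (Finset.mem_univ i)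
        have := Complex.normSq_nonneg (U_Ga (i,1) (j,0))
        linarith
      exact Complex.normSq_eq_zero.mp h3
    have hup : ∀ i j : Fin d, U_Ga (i,0) (j,1) = 0 := by
      intro i j
      have hrow : (∑ j, Complex.normSq (U_Ga (i,0) (j,0)))
          + (∑ j, Complex.normSq (U_Ga (i,0) (j,1))) = 1 := by
        have h2 := congrArg (fun M => M ((i : Fin d),(0 : Fin 2)) (i,0)) hGr
        simp only [Matrix.mul_apply, Matrix.conjTranspose_apply, Matrix.one_apply_eq,
          Fintype.sum_prod_type_right, Fin.sum_univ_two, Complex.star_def] at h2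
        rw [sum_mul_conj', sum_mul_conj'] at h2
        exact_mod_cast h2
      have hT0 : (∑ j, Complex.normSq (U_Ga (i,0) (j,0))) = 1 := by
        have : ∀ j, Complex.normSq (U_Ga (i,0) (j,0)) = Complex.normSq (U_T i j) := by
          intro j
          rw [hAentry i j, Complex.normSq_mul, hnormu, one_mul]
        rw [Finset.sum_congr rfl fun j _ => this j, hTrow i]
      have h2 : ∑ j, Complex.normSq (U_Ga (i,0) (j,1)) = 0 := by linarith
      have h3 : Complex.normSq (U_Ga (i,0) (j,1)) = 0 := by
        have h4 := Finset.single_le_sum (f := fun j => Complex.normSq (U_Ga (i,0) (j,1)))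
          (fun j _ => Complex.normSq_nonneg _) (Finset.mem_univ j)
        have := Complex.normSq_nonneg (U_Ga (i,0) (j,1))
        linarith
      exact Complex.normSq_eq_zero.mp h3
    set V : Matrix (Fin d) (Fin d) ℂ := Matrix.of fun i j : Fin d => U_Ga (i,1) (j,1) with hVdef
    have hVmem : V ∈ Matrix.unitaryGroup (Fin d) ℂ := by
      rw [Matrix.mem_unitaryGroup_iff', Matrix.star_eq_conjTranspose]
      ext j j'
      have h2 := congrArg (fun M => M ((j : Fin d),(1 : Fin 2)) (j',1)) hGl
      simp only [Matrix.mul_apply, Matrix.conjTranspose_apply,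
        Fintype.sum_prod_type_right, Fin.sum_univ_two, Complex.star_def] at h2
      have hz : ∀ i : Fin d, (starRingEnd ℂ) (U_Ga (i,0) (j,1)) * U_Ga (i,0) (j',1) = 0 := by
        intro i; rw [hup i j]; simp
      rw [Finset.sum_congr rfl fun i _ => hz i, Finset.sum_const, smul_zero, zero_add] at h2
      rw [Matrix.mul_apply]
      simp only [Matrix.conjTranspose_apply, Complex.star_def, hVdef, Matrix.of_apply]
      rw [h2]
      by_cases hjj : j = j'
      · subst hjj; simp [Matrix.one_apply]
      · have : ((j, (1:Fin 2)) : Fin d × Fin 2) ≠ (j', 1) := by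
          simp [Prod.ext_iff, hjj]
        rw [Matrix.one_apply_ne this, Matrix.one_apply_ne hjj]
    refine ⟨u.arg, V, hVmem, ?_⟩
    have hexp : Complex.exp (u.arg * Complex.I) = u := by
      have h1 := Complex.norm_mul_exp_arg_mul_I u
      rw [hu] at h1; simpa using h1
    ext ⟨i, k⟩ ⟨j, l⟩
    fin_cases k <;> fin_cases l <;>
      simp only [Matrix.add_apply, Matrix.kroneckerMap_apply, Matrix.single,
        Matrix.of_apply, Matrix.smul_apply, smul_eq_mul] <;>
      norm_num [Fin.ext_iff]
    · rw [hexp]; exact hAentry i j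
    · exact hup i j
    · exact hlow i j
    · rfl
  · rintro ⟨φ, V, hV, rfl⟩
    have hA : A = Complex.exp (φ * Complex.I) • U_T := by
      ext i j
      simp [hAdef, Matrix.kroneckerMap_apply, Matrix.single, Matrix.add_apply]
    rw [hA]
    rw [Matrix.conjTranspose_smul, Matrix.smul_mul, Matrix.trace_smul, hTl]
    have htr1 : Matrix.trace (1 : Matrix (Fin d) (Fin d) ℂ) = (d : ℂ) := by
      simp [Matrix.trace_one]
    rw [htr1]
    have habs : ‖star (Complex.exp (φ * Complex.I)) • (d : ℂ)‖ = d := by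
      rw [smul_eq_mul, Complex.star_def, norm_mul, Complex.norm_conj,
        Complex.norm_exp_ofReal_mul_I, one_mul, Complex.norm_natCast]
    rw [habs]
    field_simp
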